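/- arXiv:2605.09143 — 2 statements merged into one kernel-verified Lean document; each statement's English description precedes it below -/
import Mathlib

section
/- Let T = ℂ[y_1,z_1,…,y_h,z_h] and let I be the ideal generated by y_j z_k − y_k z_j for 1 ≤ j < k ≤ h and y_j y_k + z_j z_k for 1 ≤ j ≤ k ≤ h. Under the ℂ-linear change of coordinates u_j = y_j + i z_j, v_j = y_j − i z_j, the ideal I maps to the ideal (u_j v_k : 1 ≤ j, k ≤ h) = (u_1,…,u_h)·(v_1,…,v_h). -/
open MvPolynomial

/-- Over `ℂ`, under the change of coordinates `u_j = y_j + i z_j`, `v_j = y_j − i z_j`,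
the ideal `I = (y_jz_k − y_kz_j : j < k) + (y_jy_k + z_jz_k : j ≤ k)` becomes the ideal
`(u_jv_k : 1 ≤ j,k ≤ h) = (u_1,…,u_h)·(v_1,…,v_h)`. -/
theorem ideal_eq_product (h : ℕ) (hh : 1 ≤ h)
    (I : Ideal (MvPolynomial (Fin h ⊕ Fin h) ℂ))
    (hI : I = Ideal.span
      ({p | ∃ j k : Fin h, j < k ∧ p =
          X (Sum.inl j) * X (Sum.inr k) - X (Sum.inl k) * X (Sum.inr j)} ∪
       {p | ∃ j k : Fin h, j ≤ k ∧ p =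
          X (Sum.inl j) * X (Sum.inl k) + X (Sum.inr j) * X (Sum.inr k)}))
    (u v : Fin h → MvPolynomial (Fin h ⊕ Fin h) ℂ)
    (hu : u = fun j => X (Sum.inl j) + C Complex.I * X (Sum.inr j))
    (hv : v = fun j => X (Sum.inl j) - C Complex.I * X (Sum.inr j)) :
    I = Ideal.span (Set.range u) * Ideal.span (Set.range v) ∧
    Ideal.span (Set.range u) * Ideal.span (Set.range v) =
      Ideal.span {p | ∃ j k : Fin h, p = u j * v k} := by
  have hC : (C Complex.I : MvPolynomial (Fin h ⊕ Fin h) ℂ) * C Complex.I = -1 := by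
    rw [← C_mul, Complex.I_mul_I, map_neg, map_one]
  have h2 : (2 : MvPolynomial (Fin h ⊕ Fin h) ℂ) * C ((2 : ℂ)⁻¹) = 1 := by
    rw [show (2 : MvPolynomial (Fin h ⊕ Fin h) ℂ) = C (2 : ℂ) from (map_ofNat C 2).symm, ← C_mul]
    norm_num
  set J : Ideal (MvPolynomial (Fin h ⊕ Fin h) ℂ) := Ideal.span {p | ∃ j k : Fin h, p = u j * v k} with hJ
  -- membership of u j * v k in I
  have huv : ∀ j k : Fin h, u j * v k ∈ I := by
    intro j k
    rcases lt_trichotomy j k with hlt | heq | hgt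
    · have hs : X (Sum.inl j) * X (Sum.inl k) + X (Sum.inr j) * X (Sum.inr k) ∈ I := by
        rw [hI]; exact Ideal.subset_span (Or.inr ⟨j, k, le_of_lt hlt, rfl⟩)
      have hd : X (Sum.inl j) * X (Sum.inr k) - X (Sum.inl k) * X (Sum.inr j) ∈ I := by
        rw [hI]; exact Ideal.subset_span (Or.inl ⟨j, k, hlt, rfl⟩)
      have key : u j * v k =
          (X (Sum.inl j) * X (Sum.inl k) + X (Sum.inr j) * X (Sum.inr k)) -
          C Complex.I * (X (Sum.inl j) * X (Sum.inr k) - X (Sum.inl k) * X (Sum.inr j)) := by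
        subst hu hv
        linear_combination (-(X (Sum.inr j) * X (Sum.inr k) : MvPolynomial (Fin h ⊕ Fin h) ℂ)) * hC
      rw [key]
      exact sub_mem hs (Ideal.mul_mem_left _ _ hd)
    · subst heq
      have hs : X (Sum.inl j) * X (Sum.inl j) + X (Sum.inr j) * X (Sum.inr j) ∈ I := by
        rw [hI]; exact Ideal.subset_span (Or.inr ⟨j, j, le_rfl, rfl⟩)
      have key : u j * v j =
          X (Sum.inl j) * X (Sum.inl j) + X (Sum.inr j) * X (Sum.inr j) := by
        subst hu hv
        linear_combination (-(X (Sum.inr j) * X (Sum.inr j) : MvPolynomial (Fin h ⊕ Fin h) ℂ)) * hC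
      rw [key]; exact hs
    · have hs : X (Sum.inl k) * X (Sum.inl j) + X (Sum.inr k) * X (Sum.inr j) ∈ I := by
        rw [hI]; exact Ideal.subset_span (Or.inr ⟨k, j, le_of_lt hgt, rfl⟩)
      have hd : X (Sum.inl k) * X (Sum.inr j) - X (Sum.inl j) * X (Sum.inr k) ∈ I := by
        rw [hI]; exact Ideal.subset_span (Or.inl ⟨k, j, hgt, rfl⟩)
      have key : u j * v k =
          (X (Sum.inl k) * X (Sum.inl j) + X (Sum.inr k) * X (Sum.inr j)) +
          C Complex.I * (X (Sum.inl k) * X (Sum.inr j) - X (Sum.inl j) * X (Sum.inr k)) := by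
        subst hu hv
        linear_combination (-(X (Sum.inr j) * X (Sum.inr k) : MvPolynomial (Fin h ⊕ Fin h) ℂ)) * hC
      rw [key]
      exact add_mem hs (Ideal.mul_mem_left _ _ hd)
  -- I = J
  have hIJ : I = J := by
    apply le_antisymm
    · rw [hI, Ideal.span_le]
      rintro p (⟨j, k, hjk, rfl⟩ | ⟨j, k, hjk, rfl⟩)
      · have hjk' : u j * v k ∈ J := Ideal.subset_span ⟨j, k, rfl⟩
        have hkj' : u k * v j ∈ J := Ideal.subset_span ⟨k, j, rfl⟩
        have key : X (Sum.inl j) * X (Sum.inr k) - X (Sum.inl k) * X (Sum.inr j) =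
            C ((2 : ℂ)⁻¹) * (C Complex.I * (u j * v k) - C Complex.I * (u k * v j)) := by
          subst hu hv
          linear_combination
            (-(X (Sum.inl k) * X (Sum.inr j) - X (Sum.inl j) * X (Sum.inr k) : MvPolynomial (Fin h ⊕ Fin h) ℂ)) * hC +
            (-((X (Sum.inl k) * X (Sum.inr j) - X (Sum.inl j) * X (Sum.inr k)) *
              (C Complex.I * C Complex.I)) : MvPolynomial (Fin h ⊕ Fin h) ℂ) * h2
        rw [key]
        exact Ideal.mul_mem_left _ _
          (sub_mem (Ideal.mul_mem_left _ _ hjk') (Ideal.mul_mem_left _ _ hkj'))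
      · have hjk' : u j * v k ∈ J := Ideal.subset_span ⟨j, k, rfl⟩
        have hkj' : u k * v j ∈ J := Ideal.subset_span ⟨k, j, rfl⟩
        have key : X (Sum.inl j) * X (Sum.inl k) + X (Sum.inr j) * X (Sum.inr k) =
            C ((2 : ℂ)⁻¹) * (u j * v k + u k * v j) := by
          subst hu hv
          linear_combination (X (Sum.inr j) * X (Sum.inr k) : MvPolynomial (Fin h ⊕ Fin h) ℂ) * hC +
            ((X (Sum.inr j) * X (Sum.inr k)) * (C Complex.I * C Complex.I) -
              X (Sum.inl j) * X (Sum.inl k) : MvPolynomial (Fin h ⊕ Fin h) ℂ) * h2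
        rw [key]
        exact Ideal.mul_mem_left _ _ (add_mem hjk' hkj')
    · rw [hJ, Ideal.span_le]
      rintro p ⟨j, k, rfl⟩
      exact huv j k
  -- product = J
  have hprod : Ideal.span (Set.range u) * Ideal.span (Set.range v) = J := by
    rw [hJ, Ideal.span_mul_span']
    congr 1
    ext p
    constructor
    · rintro ⟨a, ⟨j, rfl⟩, b, ⟨k, rfl⟩, rfl⟩
      exact ⟨j, k, rfl⟩
    · rintro ⟨j, k, rfl⟩
      exact ⟨u j, ⟨j, rfl⟩, v k, ⟨k, rfl⟩, rfl⟩
  exact ⟨by rw [hprod, hIJ], hprod⟩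
end

section
/- Let K be an infinite field, S = K[x_1,…,x_N], I ⊆ S an unmixed radical homogeneous ideal of height h < N, and J = (f_1,…,f_h) ⊆ I generated by a homogeneous regular sequence of degrees d_1 ≤ … ≤ d_h. Suppose for each minimal prime 𝔭_1,…,𝔭_s of I there exist homogeneous g_1,…,g_s with deg(g_t) ≤ D := Σ(d_i − 1) and 𝔭_t = J : g_t. Then there exists a homogeneous g of degree exactly D with I = J : g. -/
/-!
Take a linear form `ℓ` outside every minimal prime `p` of `I` and put
`g = ∑ₚ ℓ ^ (D - deg gₚ) * gₚ`, which is homogeneous of degree `D`. If `r ∈ I` then `r gₚ ∈ J`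
for every `p`, so `r g ∈ J`. Conversely, if `r g ∈ J`, multiplying by an element that lies in
all minimal primes except `p` kills the other summands, so `r ℓ ^ _ ∈ J : gₚ = p` and `r ∈ p`;
as `I` is radical it is the intersection of its minimal primes.

Since `K` is infinite, `ℓ` exists as soon as no minimal prime contains all the variables. A
minimal prime is associated to `S ⧸ I`, so has height `h < N`, whereas the kernels of the maps
setting more and more variables to zero form a chain of `N + 1` primes inside `(x₁, …, x_N)`.
-/

open MvPolynomial

namespace MvPolynomial

variable {σ R : Type*} [CommRing R]

section killVars

variable [DecidableEq σ]

noncomputable def killVars (s : Finset σ) : MvPolynomial σ R →ₐ[R] MvPolynomial σ R :=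
  aeval fun j => if j ∈ s then 0 else X j

@[simp]
theorem killVars_X (s : Finset σ) (j : σ) :
    killVars (R := R) s (X j) = if j ∈ s then 0 else X j :=
  aeval_X _ _

theorem killVars_comp_killVars {s t : Finset σ} (hst : s ⊆ t) :
    (killVars (R := R) t).comp (killVars s) = killVars t := by
  refine algHom_ext fun j => ?_
  by_cases hs : j ∈ s
  · simp [hs, hst hs]
  · simp [hs]

theorem ker_killVars_mono {s t : Finset σ} (hst : s ⊆ t) :
    RingHom.ker (killVars (R := R) s) ≤ RingHom.ker (killVars t) := by
  intro p hp
  rw [RingHom.mem_ker] at hp ⊢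
  rw [← killVars_comp_killVars hst, AlgHom.comp_apply, hp, map_zero]

theorem ker_killVars_univ_le_idealOfVars [Fintype σ] :
    RingHom.ker (killVars (R := R) (Finset.univ : Finset σ)) ≤ idealOfVars σ R := by
  intro p hp
  have hconst : killVars (R := R) (Finset.univ : Finset σ) = aeval 0 :=
    algHom_ext fun j => by simp
  rw [RingHom.mem_ker, hconst, aeval_zero, algebraMap_eq, C_eq_zero] at hp
  rw [← pow_one (idealOfVars σ R), mem_pow_idealOfVars_iff']
  intro x hx
  rw [Nat.lt_one_iff, Finsupp.degree_eq_zero_iff] at hx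
  rwa [hx, ← constantCoeff_eq]

theorem card_le_height_ker_killVars [IsDomain R] (s : Finset σ) :
    (s.card : ℕ∞) ≤ (RingHom.ker (killVars (R := R) s)).height := by
  induction s using Finset.induction_on with
  | empty => simp
  | insert a s ha ih =>
    have hlt : RingHom.ker (killVars (R := R) s) < RingHom.ker (killVars (insert a s)) := by
      refine lt_of_le_of_ne (ker_killVars_mono (Finset.subset_insert a s)) fun h => ?_
      have hX : X a ∈ RingHom.ker (killVars (R := R) (insert a s)) := by simp
      rw [← h, RingHom.mem_ker, killVars_X, if_neg ha] at hX
      exact X_ne_zero a hX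
    have := RingHom.ker_isPrime (killVars (R := R) s)
    have := RingHom.ker_isPrime (killVars (R := R) (insert a s))
    rw [Finset.card_insert_of_notMem ha, Nat.cast_add, Nat.cast_one]
    exact (add_le_add_left ih 1).trans (Ideal.height_add_one_le_of_lt_of_isPrime hlt)

end killVars

theorem card_le_height_idealOfVars [IsDomain R] [Fintype σ] :
    (Fintype.card σ : ℕ∞) ≤ (idealOfVars σ R).height := by
  classical
  exact (card_le_height_ker_killVars Finset.univ).trans
    (Ideal.height_mono ker_killVars_univ_le_idealOfVars)

theorem exists_X_notMem_of_height_lt [IsDomain R] [Fintype σ] {P : Ideal (MvPolynomial σ R)}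
    (hP : P.height < Fintype.card σ) : ∃ j, X j ∉ P := by
  by_contra! hX
  exact (card_le_height_idealOfVars.trans
    (Ideal.height_mono (Ideal.span_le.mpr (Set.range_subset_iff.mpr hX)))).not_gt hP

theorem exists_isHomogeneous_one_forall_notMem {K ι : Type*} [Field K] [Infinite K] [Finite ι]
    (P : ι → Ideal (MvPolynomial σ K)) (hP : ∀ i, ∃ j, X j ∉ P i) :
    ∃ ℓ : MvPolynomial σ K, ℓ.IsHomogeneous 1 ∧ ∀ i, ℓ ∉ P i := by
  let V := homogeneousSubmodule σ K 1
  obtain ⟨ℓ, hℓ⟩ := Submodule.exists_forall_notMem_of_forall_ne_top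
    (fun i => ((P i).restrictScalars K).comap V.subtype) fun i htop => by
      obtain ⟨j, hj⟩ := hP i
      have hXV : (X j : MvPolynomial σ K) ∈ V := isHomogeneous_X K j
      exact hj (htop ▸ Submodule.mem_top : (⟨X j, hXV⟩ : V) ∈ _)
  exact ⟨ℓ, ℓ.2, hℓ⟩

end MvPolynomial

theorem Ideal.minimalPrimes_subset_associatedPrimes {R : Type*} [CommRing R] [IsNoetherianRing R]
    (I : Ideal R) : I.minimalPrimes ⊆ associatedPrimes R (R ⧸ I) := fun _ hp =>
  Module.associatedPrimes.minimalPrimes_annihilator_subset_associatedPrimes _ _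
    (by rwa [Ideal.annihilator_quotient])

theorem Ideal.colon_span_sum_eq_iInf {R ι : Type*} [CommRing R] [Fintype ι] {J : Ideal R}
    {P : ι → Ideal R} [hP : ∀ i, (P i).IsPrime] (hP_anti : Pairwise fun i j => ¬P i ≤ P j)
    {g a : ι → R} (hg : ∀ i, P i = J.colon (Ideal.span {g i})) (ha : ∀ i, a i ∉ P i) :
    J.colon (Ideal.span {∑ i, a i * g i}) = ⨅ i, P i := by
  classical
  refine le_antisymm (le_iInf fun i r hr => ?_) fun r hr => ?_
  · rw [Ideal.mem_colon_span_singleton] at hr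
    obtain ⟨x, hx, hxi⟩ : ∃ x ∈ (Finset.univ.erase i).inf P, x ∉ P i := by
      refine SetLike.not_le_iff_exists.mp fun hle => ?_
      obtain ⟨j, hj, hji⟩ := (hP i).inf_le'.mp hle
      exact hP_anti (Finset.ne_of_mem_erase hj) hji
    have hother : ∑ j ∈ Finset.univ.erase i, x * r * (a j * g j) ∈ J := by
      refine J.sum_mem fun j hj => ?_
      have hxg : x * g j ∈ J := by
        rw [← Ideal.mem_colon_span_singleton, ← hg j]
        exact (Finset.inf_le hj : _ ≤ P j) hx
      rw [show x * r * (a j * g j) = r * a j * (x * g j) by ring]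
      exact J.mul_mem_left _ hxg
    have hdiag : x * r * a i * g i ∈ J := by
      have hsum : x * r * (a i * g i) + ∑ j ∈ Finset.univ.erase i, x * r * (a j * g j) ∈ J := by
        rw [Finset.add_sum_erase _ (fun j => x * r * (a j * g j)) (Finset.mem_univ i),
          ← Finset.mul_sum, mul_assoc]
        exact J.mul_mem_left x hr
      rw [mul_assoc]
      exact (J.add_mem_iff_left hother).mp hsum
    rw [← Ideal.mem_colon_span_singleton, ← hg i] at hdiag
    exact ((hP i).mem_or_mem (((hP i).mem_or_mem hdiag).resolve_right (ha i))).resolve_left hxi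
  · rw [Ideal.mem_colon_span_singleton, Finset.mul_sum]
    refine J.sum_mem fun i _ => ?_
    have hrg : r * g i ∈ J := by
      rw [← Ideal.mem_colon_span_singleton, ← hg i]
      exact Ideal.mem_iInf.mp hr i
    rw [mul_left_comm]
    exact J.mul_mem_left _ hrg

theorem exists_colon_element_general (K : Type*) [Field K] [Infinite K] (N h : ℕ)
    (hhN : h < N)
    (I : Ideal (MvPolynomial (Fin N) K))
    (hrad : I.IsRadical)
    (hunmixed : ∀ P : PrimeSpectrum (MvPolynomial (Fin N) K),
      P.asIdeal ∈ associatedPrimes (MvPolynomial (Fin N) K)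
        (MvPolynomial (Fin N) K ⧸ I) → Order.height P = (h : ℕ∞))
    (J : Ideal (MvPolynomial (Fin N) K))
    (D : ℕ)
    (hmin : ∀ p ∈ I.minimalPrimes, ∃ (g : MvPolynomial (Fin N) K) (e : ℕ),
      e ≤ D ∧ g.IsHomogeneous e ∧ p = J.colon (Ideal.span {g})) :
    ∃ g : MvPolynomial (Fin N) K, g.IsHomogeneous D ∧ I = J.colon (Ideal.span {g}) := by
  have : Fintype I.minimalPrimes := I.finite_minimalPrimes_of_isNoetherianRing.fintype
  have hprime : ∀ p : I.minimalPrimes, p.1.IsPrime := fun p => p.2.isPrime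
  have hanti : Pairwise fun p q : I.minimalPrimes => ¬p.1 ≤ q.1 := fun p q hpq hle =>
    hpq (Subtype.ext (le_antisymm hle (q.2.2 p.2.1 hle)))
  have hvars : ∀ p : I.minimalPrimes, ∃ j, X j ∉ p.1 := fun p => by
    refine exists_X_notMem_of_height_lt ?_
    rw [PrimeSpectrum.height_eq_orderHeight ⟨p.1, hprime p⟩,
      hunmixed _ (I.minimalPrimes_subset_associatedPrimes p.2), Fintype.card_fin]
    exact_mod_cast hhN
  obtain ⟨ℓ, hℓ, hℓp⟩ := exists_isHomogeneous_one_forall_notMem (fun p : I.minimalPrimes => p.1)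
    hvars
  choose g e heD hg hcolon using fun p : I.minimalPrimes => hmin p.1 p.2
  refine ⟨∑ p, ℓ ^ (D - e p) * g p, ?_, ?_⟩
  · refine IsHomogeneous.sum _ _ _ fun p _ => ?_
    simpa [Nat.sub_add_cancel (heD p)] using (hℓ.pow (D - e p)).mul (hg p)
  · rw [Ideal.colon_span_sum_eq_iInf hanti hcolon fun p hmem =>
      hℓp p ((hprime p).mem_of_pow_mem _ hmem), ← sInf_eq_iInf', Ideal.sInf_minimalPrimes,
      hrad.radical]

/-- Let `K` be an infinite field, `I ⊆ S = K[x_1,…,x_N]` an unmixed radical homogeneous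
ideal of height `h < N` (unmixedness of height `h`: every associated prime of `S/I` has
height `h`), and `J = (f_1,…,f_h) ⊆ I` generated by a homogeneous regular sequence of
degrees `d_1 ≤ … ≤ d_h`. If for each minimal prime `𝔭` of `I` there is a homogeneous
`g` of degree `≤ D := Σ(d_i − 1)` with `𝔭 = J : g`, then there exists a homogeneous `g`
of degree exactly `D` with `I = J : g`. -/
theorem exists_colon_element (K : Type*) [Field K] [Infinite K] (N h : ℕ)
    (hh : 1 ≤ h) (hhN : h < N)
    (I : Ideal (MvPolynomial (Fin N) K))
    (hhom : ∀ p ∈ I, ∀ n : ℕ,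
      (((p : MvPolynomial (Fin N) K).homogeneousComponent n : MvPolynomial (Fin N) K)) ∈ I)
    (hrad : I.IsRadical) (hproper : I ≠ ⊤)
    (hunmixed : ∀ P : PrimeSpectrum (MvPolynomial (Fin N) K),
      P.asIdeal ∈ associatedPrimes (MvPolynomial (Fin N) K)
        (MvPolynomial (Fin N) K ⧸ I) → Order.height P = (h : ℕ∞))
    (f : Fin h → MvPolynomial (Fin N) K) (d : Fin h → ℕ) (hmono : Monotone d)
    (hfhom : ∀ i, (f i).IsHomogeneous (d i))
    (hreg : RingTheory.Sequence.IsRegular (MvPolynomial (Fin N) K) (List.ofFn f))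
    (J : Ideal (MvPolynomial (Fin N) K)) (hJ : J = Ideal.span (Set.range f))
    (hJI : J ≤ I)
    (D : ℕ) (hD : D = ∑ i, (d i - 1))
    (hmin : ∀ p ∈ I.minimalPrimes, ∃ (g : MvPolynomial (Fin N) K) (e : ℕ),
      e ≤ D ∧ g.IsHomogeneous e ∧ p = J.colon (Ideal.span {g})) :
    ∃ g : MvPolynomial (Fin N) K, g.IsHomogeneous D ∧ I = J.colon (Ideal.span {g}) :=
  exists_colon_element_general K N h hhN I hrad hunmixed J D hmin
end
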